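/- The kernel of the natural surjection Γ_n[2] → Γ_{n-k}[2] (induced by fixing the first k standard basis vectors and projecting to the last n−k coordinates) restricted to the subgroup Γ_n[2](k) of matrices fixing v_1,...,v_k is isomorphic to Hom(ℤ^{n-k}, (2ℤ)^k); moreover this exact sequence splits. -/

import Mathlib

/-!
Reindexing `Fin n` as `Fin k ⊕ Fin (n - k)`, an element of `Γ_n[2](k)` is a block matrix
`[[1, B], [0, D]]` with `B ≡ 0` and `D ≡ 1` mod 2. Block multiplication
`[[1, B], [0, D]] * [[1, B'], [0, D']] = [[1, B' + B D'], [0, D D']]` shows that `g ↦ D` is a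
homomorphism, split by `D ↦ [[1, 0], [0, D]]`, and that on its kernel `g ↦ B` is additive. As `B`
ranges over all even matrices, the kernel is `Hom(ℤ^{n-k}, (2ℤ)^k)`.
-/

/-- The principal level 2 congruence subgroup of `GL(n, ℤ)`. -/
def congruence2 (n : ℕ) : Subgroup (GL (Fin n) ℤ) :=
  (Matrix.GeneralLinearGroup.map (Int.castRingHom (ZMod 2))).ker

/-- `Γ_n[2](k)`: the subgroup of `Γ_n[2]` of matrices fixing the first `k`
standard basis vectors. -/
def congruence2Fix (n k : ℕ) : Subgroup (GL (Fin n) ℤ) where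
  carrier := {g | g ∈ congruence2 n ∧ ∀ i : Fin n, (i : ℕ) < k →
    (g : Matrix (Fin n) (Fin n) ℤ).mulVec (Pi.single i 1) = Pi.single i 1}
  one_mem' := ⟨one_mem _, fun i _ => by rw [Units.val_one, Matrix.one_mulVec]⟩
  mul_mem' := by
    rintro a b ⟨ha, ha'⟩ ⟨hb, hb'⟩
    refine ⟨mul_mem ha hb, fun i hi => ?_⟩
    have : ((a * b : GL (Fin n) ℤ) : Matrix (Fin n) (Fin n) ℤ) =
        (a : Matrix (Fin n) (Fin n) ℤ) * (b : Matrix (Fin n) (Fin n) ℤ) := rfl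
    rw [this, ← Matrix.mulVec_mulVec, hb' i hi, ha' i hi]
  inv_mem' := by
    rintro a ⟨ha, ha'⟩
    refine ⟨inv_mem ha, fun i hi => ?_⟩
    have h1 : ((a⁻¹ : GL (Fin n) ℤ) : Matrix (Fin n) (Fin n) ℤ) *
        (a : Matrix (Fin n) (Fin n) ℤ) = 1 := by
      rw [← Units.val_mul, inv_mul_cancel, Units.val_one]
    calc ((a⁻¹ : GL (Fin n) ℤ) : Matrix (Fin n) (Fin n) ℤ).mulVec
          (Pi.single i 1)
        = ((a⁻¹ : GL (Fin n) ℤ) : Matrix (Fin n) (Fin n) ℤ).mulVec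
          ((a : Matrix (Fin n) (Fin n) ℤ).mulVec (Pi.single i 1)) := by
          rw [ha' i hi]
      _ = Pi.single i 1 := by rw [Matrix.mulVec_mulVec, h1, Matrix.one_mulVec]

/-- The additive group `Hom(ℤ^{n-k}, (2ℤ)^k)`: additive homomorphisms
`ℤ^{n-k} → ℤ^k` all of whose values have even coordinates. -/
def evenHoms (n k : ℕ) : AddSubgroup ((Fin (n - k) → ℤ) →+ (Fin k → ℤ)) where
  carrier := {f | ∀ v i, Even (f v i)}
  zero_mem' := fun v i => by simp
  add_mem' := by
    intro f g hf hg v i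
    simpa using (hf v i).add (hg v i)
  neg_mem' := by
    intro f hf v i
    simpa using (hf v i).neg

open Matrix

section Blocks

variable {m o R : Type*} [DecidableEq m] [CommRing R]

theorem Matrix.fromBlocks_one_zero_mul [Fintype m] [Fintype o] (B B' : Matrix m o R)
    (D D' : Matrix o o R) :
    fromBlocks (1 : Matrix m m R) B 0 D * fromBlocks 1 B' 0 D' =
      fromBlocks (1 : Matrix m m R) (B' + B * D') 0 (D * D') := by
  simp [fromBlocks_multiply, add_comm]

theorem Matrix.isUnit_fromBlocks_one_zero [Fintype m] [Fintype o] [DecidableEq o]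
    (B : Matrix m o R) {D : Matrix o o R} (hD : IsUnit D) :
    IsUnit (fromBlocks (1 : Matrix m m R) B 0 D) := by
  rw [isUnit_iff_isUnit_det, det_fromBlocks_zero₂₁, det_one, one_mul]
  exact (isUnit_iff_isUnit_det D).1 hD

theorem Matrix.map_fromBlocks_one_zero_eq_one_iff [DecidableEq o] {S : Type*} [CommRing S]
    (f : R →+* S) (B : Matrix m o R) (D : Matrix o o R) :
    (fromBlocks (1 : Matrix m m R) B 0 D).map f = 1 ↔ B.map f = 0 ∧ D.map f = 1 := by
  rw [fromBlocks_map, Matrix.map_one _ f.map_zero f.map_one, Matrix.map_zero _ f.map_zero,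
    ← fromBlocks_one, fromBlocks_inj]
  simp

end Blocks

variable {n k : ℕ}

def finSplit (hk : k ≤ n) : Fin k ⊕ Fin (n - k) ≃ Fin n :=
  finSumFinEquiv.trans (finCongr (Nat.add_sub_cancel' hk))

theorem finSplit_inl_val (hk : k ≤ n) (i : Fin k) : (finSplit hk (.inl i) : ℕ) = i := by
  simp [finSplit]

theorem forall_lt_iff_forall_finSplit_inl (hk : k ≤ n) {P : Fin n → Prop} :
    (∀ i : Fin n, (i : ℕ) < k → P i) ↔ ∀ b, P (finSplit hk (.inl b)) :=
  ⟨fun h b => h _ (by simp [finSplit_inl_val]),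
    fun h i hi => (Fin.ext (finSplit_inl_val hk _) : finSplit hk (.inl ⟨i, hi⟩) = i) ▸ h _⟩

variable (R : Type*) [CommRing R] in
def reindexSplit (hk : k ≤ n) :
    Matrix (Fin n) (Fin n) R ≃ₐ[R] Matrix (Fin k ⊕ Fin (n - k)) (Fin k ⊕ Fin (n - k)) R :=
  reindexAlgEquiv R R (finSplit hk).symm

theorem reindexSplit_apply {R : Type*} [CommRing R] (hk : k ≤ n) (M : Matrix (Fin n) (Fin n) R)
    (a b : Fin k ⊕ Fin (n - k)) : reindexSplit R hk M a b = M (finSplit hk a) (finSplit hk b) :=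
  rfl

theorem map_reindexSplit {R S : Type*} [CommRing R] [CommRing S] (f : R →+* S) (hk : k ≤ n)
    (M : Matrix (Fin n) (Fin n) R) : (reindexSplit R hk M).map f = reindexSplit S hk (M.map f) :=
  rfl

theorem fixes_iff_toBlocks {R : Type*} [CommRing R] (hk : k ≤ n) (M : Matrix (Fin n) (Fin n) R) :
    (∀ i : Fin n, (i : ℕ) < k → M *ᵥ Pi.single i 1 = Pi.single i 1) ↔
      (reindexSplit R hk M).toBlocks₁₁ = 1 ∧ (reindexSplit R hk M).toBlocks₂₁ = 0 := by
  have hcol (b : Fin k) :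
      M *ᵥ Pi.single (finSplit hk (.inl b)) 1 = Pi.single (finSplit hk (.inl b)) 1 ↔
        ∀ a, reindexSplit R hk M a (.inl b) =
          (1 : Matrix (Fin k ⊕ Fin (n - k)) (Fin k ⊕ Fin (n - k)) R) a (.inl b) := by
    rw [mulVec_single_one, funext_iff, ← (finSplit hk).forall_congr_right]
    simp [reindexSplit_apply, Pi.single_apply, one_apply]
  simp only [forall_lt_iff_forall_finSplit_inl hk, hcol, Sum.forall, ← ext_iff]
  simp [toBlocks₁₁, toBlocks₂₁, one_apply, forall_and]
  exact and_congr forall_comm forall_comm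

theorem mem_congruence2_iff (g : GL (Fin n) ℤ) :
    g ∈ congruence2 n ↔ (g : Matrix (Fin n) (Fin n) ℤ).map (Int.castRingHom (ZMod 2)) = 1 :=
  Units.ext_iff

theorem mem_congruence2_iff_reindexSplit (hk : k ≤ n) (g : GL (Fin n) ℤ) :
    g ∈ congruence2 n ↔ (reindexSplit ℤ hk g).map (Int.castRingHom (ZMod 2)) = 1 := by
  rw [mem_congruence2_iff, map_reindexSplit, ← (reindexSplit (ZMod 2) hk).injective.eq_iff,
    map_one]

theorem mem_congruence2Fix_iff (hk : k ≤ n) (g : GL (Fin n) ℤ) :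
    g ∈ congruence2Fix n k ↔
      fromBlocks 1 (reindexSplit ℤ hk g).toBlocks₁₂ 0 (reindexSplit ℤ hk g).toBlocks₂₂ =
          reindexSplit ℤ hk g ∧
        (reindexSplit ℤ hk g).toBlocks₁₂.map (Int.castRingHom (ZMod 2)) = 0 ∧
        (reindexSplit ℤ hk g).toBlocks₂₂.map (Int.castRingHom (ZMod 2)) = 1 := by
  change g ∈ congruence2 n ∧ _ ↔ _
  rw [fixes_iff_toBlocks hk, mem_congruence2_iff_reindexSplit hk]
  set N := reindexSplit ℤ hk g
  constructor
  · rintro ⟨hN, h₁₁, h₂₁⟩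
    have hblocks : fromBlocks 1 N.toBlocks₁₂ 0 N.toBlocks₂₂ = N := by
      rw [← h₁₁, ← h₂₁, fromBlocks_toBlocks]
    rw [← hblocks, map_fromBlocks_one_zero_eq_one_iff] at hN
    exact ⟨hblocks, hN⟩
  · rintro ⟨hblocks, hB, hD⟩
    rw [← hblocks, map_fromBlocks_one_zero_eq_one_iff]
    exact ⟨⟨hB, hD⟩, toBlocks_fromBlocks₁₁ .., toBlocks_fromBlocks₂₁ ..⟩

theorem reindexSplit_eq_fromBlocks (hk : k ≤ n) (g : congruence2Fix n k) :
    reindexSplit ℤ hk (g : GL (Fin n) ℤ) =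
      fromBlocks 1 (reindexSplit ℤ hk (g : GL (Fin n) ℤ)).toBlocks₁₂ 0
        (reindexSplit ℤ hk (g : GL (Fin n) ℤ)).toBlocks₂₂ :=
  ((mem_congruence2Fix_iff hk g).1 g.2).1.symm

def lowerRightBlock (hk : k ≤ n) :
    congruence2Fix n k →* Matrix (Fin (n - k)) (Fin (n - k)) ℤ where
  toFun g := (reindexSplit ℤ hk (g : GL (Fin n) ℤ)).toBlocks₂₂
  map_one' := by simp [← fromBlocks_one]
  map_mul' g h := by
    rw [Subgroup.coe_mul, Units.val_mul, map_mul, reindexSplit_eq_fromBlocks hk g,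
      reindexSplit_eq_fromBlocks hk h, fromBlocks_one_zero_mul]
    simp

def upperRightBlock (hk : k ≤ n) (g : congruence2Fix n k) : Matrix (Fin k) (Fin (n - k)) ℤ :=
  (reindexSplit ℤ hk (g : GL (Fin n) ℤ)).toBlocks₁₂

def lowerRightHom (hk : k ≤ n) : congruence2Fix n k →* congruence2 (n - k) :=
  (lowerRightBlock hk).toHomUnits.codRestrict _ fun g =>
    (mem_congruence2_iff _).2 ((mem_congruence2Fix_iff hk g).1 g.2).2.2

theorem lowerRightHom_apply (hk : k ≤ n) (g : congruence2Fix n k) (i j : Fin (n - k)) :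
    ((lowerRightHom hk g : GL (Fin (n - k)) ℤ) : Matrix (Fin (n - k)) (Fin (n - k)) ℤ) i j =
      ((g : GL (Fin n) ℤ) : Matrix (Fin n) (Fin n) ℤ)
        (finSplit hk (.inr i)) (finSplit hk (.inr j)) :=
  rfl

theorem mem_ker_lowerRightHom_iff (hk : k ≤ n) (g : congruence2Fix n k) :
    g ∈ (lowerRightHom hk).ker ↔ (reindexSplit ℤ hk (g : GL (Fin n) ℤ)).toBlocks₂₂ = 1 := by
  rw [lowerRightHom, MonoidHom.ker_codRestrict, MonoidHom.ker_toHomUnits, MonoidHom.mem_ker]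
  rfl

noncomputable def blockUnit (hk : k ≤ n) (B : Matrix (Fin k) (Fin (n - k)) ℤ)
    (D : GL (Fin (n - k)) ℤ) : GL (Fin n) ℤ :=
  ((isUnit_fromBlocks_one_zero B D.isUnit).map (reindexSplit ℤ hk).symm).unit

theorem reindexSplit_blockUnit (hk : k ≤ n) (B : Matrix (Fin k) (Fin (n - k)) ℤ)
    (D : GL (Fin (n - k)) ℤ) :
    reindexSplit ℤ hk (blockUnit hk B D) = fromBlocks 1 B 0 (D : Matrix _ _ ℤ) := by
  simp [blockUnit]

theorem blockUnit_mem_congruence2Fix (hk : k ≤ n) {B : Matrix (Fin k) (Fin (n - k)) ℤ}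
    (hB : B.map (Int.castRingHom (ZMod 2)) = 0) {D : GL (Fin (n - k)) ℤ}
    (hD : D ∈ congruence2 (n - k)) : blockUnit hk B D ∈ congruence2Fix n k := by
  rw [mem_congruence2Fix_iff hk, reindexSplit_blockUnit]
  simp only [toBlocks_fromBlocks₁₂, toBlocks_fromBlocks₂₂, true_and]
  exact ⟨hB, (mem_congruence2_iff D).1 hD⟩

noncomputable def lowerRightSection (hk : k ≤ n) :
    congruence2 (n - k) →* congruence2Fix n k where
  toFun D := ⟨blockUnit hk 0 D, blockUnit_mem_congruence2Fix hk (Matrix.map_zero _ rfl) D.2⟩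
  map_one' := by
    ext : 2
    apply (reindexSplit ℤ hk).injective
    simp [reindexSplit_blockUnit]
  map_mul' D D' := by
    ext : 2
    apply (reindexSplit ℤ hk).injective
    simp [reindexSplit_blockUnit, fromBlocks_one_zero_mul]

theorem lowerRightHom_comp_lowerRightSection (hk : k ≤ n) :
    (lowerRightHom hk).comp (lowerRightSection hk) = MonoidHom.id _ := by
  ext D : 3
  simp [lowerRightHom, lowerRightBlock, lowerRightSection, reindexSplit_blockUnit]

theorem mulVecLin_mem_evenHoms_iff (B : Matrix (Fin k) (Fin (n - k)) ℤ) :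
    (mulVecLin B).toAddMonoidHom ∈ evenHoms n k ↔ B.map (Int.castRingHom (ZMod 2)) = 0 := by
  change (∀ v i, Even ((B *ᵥ v) i)) ↔ _
  simp only [← ZMod.intCast_eq_zero_iff_even]
  constructor
  · intro h
    ext i j
    simpa [mulVec_single_one] using h (Pi.single j 1) i
  · intro h v i
    have := RingHom.map_mulVec (Int.castRingHom (ZMod 2)) B v i
    rwa [h, zero_mulVec] at this

theorem upperRightBlock_mul (hk : k ≤ n) (g h : congruence2Fix n k)
    (hh : (reindexSplit ℤ hk (h : GL (Fin n) ℤ)).toBlocks₂₂ = 1) :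
    upperRightBlock hk (g * h) = upperRightBlock hk g + upperRightBlock hk h := by
  simp only [upperRightBlock]
  rw [Subgroup.coe_mul, Units.val_mul, map_mul, reindexSplit_eq_fromBlocks hk g,
    reindexSplit_eq_fromBlocks hk h, fromBlocks_one_zero_mul]
  simp [hh, add_comm]

noncomputable def kerLowerRightHomToEvenHoms (hk : k ≤ n) :
    (lowerRightHom hk).ker →* Multiplicative (evenHoms n k) :=
  MonoidHom.mk' (fun g => .ofAdd ⟨(mulVecLin (upperRightBlock hk g)).toAddMonoidHom,
      (mulVecLin_mem_evenHoms_iff _).2 ((mem_congruence2Fix_iff hk _).1 g.1.2).2.1⟩)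
    fun g h => by
      refine congrArg Multiplicative.ofAdd (Subtype.ext (AddMonoidHom.ext fun v => ?_))
      simp [upperRightBlock_mul hk g h ((mem_ker_lowerRightHom_iff hk h).1 h.2)]

theorem kerLowerRightHomToEvenHoms_injective (hk : k ≤ n) :
    Function.Injective (kerLowerRightHomToEvenHoms hk) := by
  refine (injective_iff_map_eq_one _).2 fun g hg => ?_
  have hB : upperRightBlock hk g = 0 := by
    refine ext_of_mulVec_single fun j => ?_
    rw [zero_mulVec]
    exact DFunLike.congr_fun (congrArg Subtype.val (congrArg Multiplicative.toAdd hg)) _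
  have hD := (mem_ker_lowerRightHom_iff hk g).1 g.2
  ext : 3
  apply (reindexSplit ℤ hk).injective
  rw [reindexSplit_eq_fromBlocks hk g, hD]
  simp only [upperRightBlock] at hB
  simp [hB, fromBlocks_one]

theorem kerLowerRightHomToEvenHoms_surjective (hk : k ≤ n) :
    Function.Surjective (kerLowerRightHomToEvenHoms hk) := by
  intro f
  set B := LinearMap.toMatrix' (f.toAdd : (Fin (n - k) → ℤ) →+ (Fin k → ℤ)).toIntLinearMap
  have hBf : (mulVecLin B).toAddMonoidHom = f.toAdd := by
    rw [← toLin'_apply', toLin'_toMatrix']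
    rfl
  have hB := (mulVecLin_mem_evenHoms_iff B).1 (hBf ▸ f.toAdd.2)
  have hg := blockUnit_mem_congruence2Fix hk hB (one_mem (congruence2 (n - k)))
  have hB' : upperRightBlock hk ⟨_, hg⟩ = B := by simp [upperRightBlock, reindexSplit_blockUnit]
  refine ⟨⟨⟨_, hg⟩, (mem_ker_lowerRightHom_iff hk _).2 ?_⟩, ?_⟩
  · simp [reindexSplit_blockUnit]
  · refine congrArg Multiplicative.ofAdd (Subtype.ext ?_)
    change (mulVecLin (upperRightBlock hk _)).toAddMonoidHom = _
    rw [hB', hBf]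
    rfl

/-- The natural surjection `Γ_n[2](k) → Γ_{n-k}[2]` (taking the lower-right
`(n-k) × (n-k)` block) has kernel isomorphic to `Hom(ℤ^{n-k}, (2ℤ)^k)`, and
the resulting short exact sequence splits. -/
theorem congruence2_birman_sequence {n k : ℕ} (hk : k ≤ n) :
    ∃ π : congruence2Fix n k →* congruence2 (n - k),
      (∀ (g : congruence2Fix n k) (i j : Fin (n - k)),
        (((π g : GL (Fin (n - k)) ℤ)) : Matrix (Fin (n - k)) (Fin (n - k)) ℤ) i j =
          (((g : GL (Fin n) ℤ)) : Matrix (Fin n) (Fin n) ℤ)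
            ⟨k + (i : ℕ), by omega⟩ ⟨k + (j : ℕ), by omega⟩) ∧
      Function.Surjective π ∧
      (∃ s : congruence2 (n - k) →* congruence2Fix n k,
        π.comp s = MonoidHom.id _) ∧
      Nonempty (π.ker ≃* Multiplicative (evenHoms n k)) := by
  have hsplit := lowerRightHom_comp_lowerRightSection hk
  -- `finSplit hk (.inr i)` unfolds to `⟨k + i, _⟩`
  refine ⟨lowerRightHom hk, lowerRightHom_apply hk, fun D => ⟨_, DFunLike.congr_fun hsplit D⟩,
    ⟨_, hsplit⟩, ⟨.ofBijective _ ⟨kerLowerRightHomToEvenHoms_injective hk,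
      kerLowerRightHomToEvenHoms_surjective hk⟩⟩⟩
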